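/- arXiv:1506.04672 — 2 statements merged into one kernel-verified Lean document; each statement's English description precedes it below -/
import Mathlib

section
/- Let s_1, ..., s_N be complex numbers with s_i^2 ≠ s_j^2 for i ≠ j. Then the function t ↦ ∑_{i=1}^N (∏_{j≠i} 1/(s_j^2 - s_i^2)) e^{-t s_i^2} is O(t^{N-1}) as t → 0^+. -/
open Finset Polynomial

/-- Key algebraic identity: for pairwise distinct `a i`,
`∑ i (∏_{j ≠ i} (a j - a i)⁻¹) a i ^ k = 0` for `k + 1 < N`. -/
lemma key_vanish (N k : ℕ) (hk : k + 1 < N) (a : Fin N → ℂ)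
    (ha : Function.Injective a) :
    ∑ i : Fin N, (∏ j ∈ Finset.univ.erase i, (a j - a i)⁻¹) * a i ^ k = 0 := by
  classical
  have hinj : Set.InjOn a (Finset.univ : Finset (Fin N)) := ha.injOn
  have hcard : #(Finset.univ : Finset (Fin N)) = N := by simp
  have hdeg : (X ^ k : ℂ[X]).degree < #(Finset.univ : Finset (Fin N)) := by
    rw [degree_X_pow, hcard]
    exact_mod_cast Nat.lt_of_succ_lt hk
  have hX : Lagrange.interpolate Finset.univ a (fun i => eval (a i) (X ^ k)) = X ^ k :=
    (Lagrange.eq_interpolate hinj hdeg).symm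
  -- take coefficient N-1 of both sides
  have hcoeff : (X ^ k : ℂ[X]).coeff (N - 1) = 0 := by
    rw [coeff_X_pow]
    simp only [if_neg (by omega : ¬ N - 1 = k)]
  have hbasis : ∀ i : Fin N,
      (Lagrange.basis Finset.univ a i).coeff (N - 1)
        = ∏ j ∈ Finset.univ.erase i, (a i - a j)⁻¹ := by
    intro i
    have hnd : (Lagrange.basis Finset.univ a i).natDegree = N - 1 := by
      rw [Lagrange.natDegree_basis hinj (mem_univ i), hcard]
    rw [← hnd, ← leadingCoeff, Lagrange.basis, leadingCoeff_prod]
    refine Finset.prod_congr rfl fun j _ => ?_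
    rw [Lagrange.basisDivisor, leadingCoeff_mul, leadingCoeff_C, leadingCoeff_X_sub_C, mul_one]
  have hzero : ∑ i : Fin N, a i ^ k * ∏ j ∈ Finset.univ.erase i, (a i - a j)⁻¹ = 0 := by
    have := congrArg (fun p : ℂ[X] => p.coeff (N - 1)) hX
    simp only [Lagrange.interpolate_apply, finset_sum_coeff, coeff_C_mul] at this
    rw [hcoeff] at this
    rw [← this]
    refine Finset.sum_congr rfl fun i _ => ?_
    rw [hbasis i, eval_pow, eval_X]
  -- relate products with flipped differences
  have hflip : ∀ i : Fin N,
      (∏ j ∈ Finset.univ.erase i, (a j - a i)⁻¹)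
        = (-1 : ℂ) ^ (N - 1) * ∏ j ∈ Finset.univ.erase i, (a i - a j)⁻¹ := by
    intro i
    have hc : #(Finset.univ.erase i) = N - 1 := by
      rw [card_erase_of_mem (mem_univ i), hcard]
    calc (∏ j ∈ Finset.univ.erase i, (a j - a i)⁻¹)
        = ∏ j ∈ Finset.univ.erase i, ((-1 : ℂ) * (a i - a j)⁻¹) := by
          refine Finset.prod_congr rfl fun j _ => ?_
          rw [show a j - a i = -(a i - a j) from by ring, inv_neg, neg_eq_neg_one_mul]
      _ = (-1 : ℂ) ^ (N - 1) * ∏ j ∈ Finset.univ.erase i, (a i - a j)⁻¹ := by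
          rw [Finset.prod_mul_distrib, Finset.prod_const, hc]
  calc ∑ i : Fin N, (∏ j ∈ Finset.univ.erase i, (a j - a i)⁻¹) * a i ^ k
      = (-1 : ℂ) ^ (N - 1) *
        ∑ i : Fin N, a i ^ k * ∏ j ∈ Finset.univ.erase i, (a i - a j)⁻¹ := by
        rw [Finset.mul_sum]
        refine Finset.sum_congr rfl fun i _ => ?_
        rw [hflip i]; ring
    _ = 0 := by rw [hzero, mul_zero]

/-- For complex numbers with pairwise distinct squares,
`t ↦ ∑ i (∏_{j ≠ i} (s j ^ 2 - s i ^ 2)⁻¹) e^{-t s i ^ 2}` is `O(t^{N-1})` as `t → 0⁺`. -/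
theorem sum_exp_isBigO_pow
    (N : ℕ) (hN : 1 ≤ N) (s : Fin N → ℂ)
    (hsq : ∀ i j, i ≠ j → s i ^ 2 ≠ s j ^ 2) :
    ∃ C δ : ℝ, 0 < C ∧ 0 < δ ∧ ∀ t : ℝ, 0 < t → t < δ →
      ‖∑ i : Fin N, (∏ j ∈ Finset.univ.erase i, (s j ^ 2 - s i ^ 2)⁻¹) *
          Complex.exp (-(t : ℂ) * s i ^ 2)‖ ≤ C * t ^ (N - 1) := by
  classical
  set b : Fin N → ℂ := fun i => s i ^ 2 with hb
  have hbinj : Function.Injective b := by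
    intro i j hij
    by_contra h
    exact hsq i j h hij
  set c : Fin N → ℂ := fun i => ∏ j ∈ Finset.univ.erase i, (b j - b i)⁻¹ with hc
  -- the vanishing sums
  have hS : ∀ k : ℕ, k + 1 < N → ∑ i : Fin N, c i * b i ^ k = 0 := by
    intro k hk
    exact key_vanish N k hk b hbinj
  -- majorant series
  set g : ℕ → ℝ := fun k => ∑ i : Fin N, ‖c i‖ * (‖b i‖ ^ k / k.factorial) with hg
  have hg_summable : Summable g := by
    refine summable_sum fun i _ => ?_
    exact (Real.summable_pow_div_factorial ‖b i‖).mul_left _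
  have hg_nonneg : ∀ k, 0 ≤ g k := fun k =>
    Finset.sum_nonneg fun i _ => mul_nonneg (norm_nonneg _)
      (div_nonneg (pow_nonneg (norm_nonneg _) _) (Nat.cast_nonneg _))
  have htsum0 : 0 ≤ ∑' k, g k := tsum_nonneg hg_nonneg
  refine ⟨(∑' k, g k) + 1, 1, by linarith, one_pos, fun t ht ht1 => ?_⟩
  -- expand the sum as a power series in t
  set term : ℕ → ℂ := fun k => ((-(t : ℂ)) ^ k / k.factorial) * ∑ i : Fin N, c i * b i ^ k
    with hterm
  have hhs : HasSum term
      (∑ i : Fin N, c i * Complex.exp (-(t : ℂ) * b i)) := by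
    have h1 : ∀ i : Fin N, HasSum (fun k : ℕ => c i * ((-(t : ℂ) * b i) ^ k / k.factorial))
        (c i * Complex.exp (-(t : ℂ) * b i)) := by
      intro i
      have := NormedSpace.exp_series_hasSum_exp' (𝕂 := ℂ) (-(t : ℂ) * b i)
      rw [← Complex.exp_eq_exp_ℂ] at this
      refine ((this.mul_left (c i)).congr_fun fun k => ?_)
      rw [smul_eq_mul]
      ring
    have h2 := hasSum_sum (s := (Finset.univ : Finset (Fin N)))
      (fun i _ => h1 i)
    refine h2.congr_fun fun k => ?_
    show ((-(t : ℂ)) ^ k / k.factorial) * (∑ i : Fin N, c i * b i ^ k) = _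
    rw [Finset.mul_sum]
    refine Finset.sum_congr rfl fun i _ => ?_
    rw [mul_pow]
    ring
  -- termwise bound
  have hbound : ∀ k, ‖term k‖ ≤ t ^ (N - 1) * g k := by
    intro k
    by_cases hk : k + 1 < N
    · rw [hterm]
      simp only [hS k hk, mul_zero, norm_zero]
      exact mul_nonneg (pow_nonneg ht.le _) (hg_nonneg k)
    · have hkN : N - 1 ≤ k := by omega
      have h1 : ‖term k‖ = t ^ k / k.factorial * ‖∑ i : Fin N, c i * b i ^ k‖ := by
        rw [hterm, norm_mul, norm_div, norm_pow, norm_neg, Complex.norm_real,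
          Real.norm_of_nonneg ht.le]
        norm_num
      have h2 : ‖∑ i : Fin N, c i * b i ^ k‖ ≤ ∑ i : Fin N, ‖c i‖ * ‖b i‖ ^ k := by
        refine (norm_sum_le _ _).trans (Finset.sum_le_sum fun i _ => ?_)
        rw [norm_mul, norm_pow]
      have h3 : t ^ k ≤ t ^ (N - 1) :=
        pow_le_pow_of_le_one ht.le ht1.le hkN
      calc ‖term k‖ = t ^ k / k.factorial * ‖∑ i : Fin N, c i * b i ^ k‖ := h1
        _ ≤ t ^ (N - 1) / k.factorial * (∑ i : Fin N, ‖c i‖ * ‖b i‖ ^ k) := by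
            refine mul_le_mul (by gcongr) h2 (norm_nonneg _) ?_
            positivity
        _ = t ^ (N - 1) * g k := by
            rw [hg, Finset.mul_sum, Finset.mul_sum]
            refine Finset.sum_congr rfl fun i _ => ?_
            ring
  have hsummable_norm : Summable fun k => ‖term k‖ :=
    Summable.of_nonneg_of_le (fun k => norm_nonneg _) hbound
      (hg_summable.mul_left _)
  calc ‖∑ i : Fin N, (∏ j ∈ Finset.univ.erase i, (s j ^ 2 - s i ^ 2)⁻¹) *
          Complex.exp (-(t : ℂ) * s i ^ 2)‖
      = ‖∑' k, term k‖ := by rw [hhs.tsum_eq]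
    _ ≤ ∑' k, ‖term k‖ := norm_tsum_le_tsum_norm hsummable_norm
    _ ≤ ∑' k, t ^ (N - 1) * g k :=
        Summable.tsum_le_tsum hbound hsummable_norm (hg_summable.mul_left _)
    _ = t ^ (N - 1) * ∑' k, g k := by rw [tsum_mul_left]
    _ ≤ ((∑' k, g k) + 1) * t ^ (N - 1) := by
        rw [mul_comm]
        have : (0:ℝ) ≤ t ^ (N-1) := pow_nonneg ht.le _
        nlinarith [this]
end

section
/- For every complex number s with Re(s^2) > 0 (or more simply, for s a positive real) and every l > 0, the integral from 0 to ∞ of e^{-t s^2} · e^{-l^2/(4t)} / (4πt)^{1/2} dt equals (1/(2s)) · e^{-s·l}. -/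
/-!
Substituting `t = x²` turns the integral into `π^{-1/2} ∫₀^∞ exp (-(s²x² + (l/2)²/x²)) dx`, and
completing the square, `s²x² + (l/2)²/x² = (s x - l/(2x))² + s l`, reduces it to the
Cauchy–Schlömilch integral `∫₀^∞ g (a x - b/x) dx = (2a)⁻¹ ∫_ℝ g` for an even integrable `g`,
here the Gaussian. That identity holds because `y = a x - b/x` maps `(0, ∞)` bijectively onto `ℝ`
with `dy = (a + b/x²) dx`, while the involution `x ↦ b/(a x)` negates `y` and turns the weight
`b/x²` into `a`, so both parts of the weight contribute the same.
-/

open Real MeasureTheory Set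

variable {E : Type*} [NormedAddCommGroup E] [NormedSpace ℝ E] {a b c : ℝ}

lemma hasDerivAt_mul_sub_div (a b : ℝ) {x : ℝ} (hx : x ≠ 0) :
    HasDerivAt (fun x => a * x - b / x) (a + b / x ^ 2) x :=
  (((hasDerivAt_id' x).const_mul a).sub ((hasDerivAt_inv hx).const_mul b)).congr_deriv
    (by ring)

lemma strictMonoOn_mul_sub_div (ha : 0 < a) (hb : 0 ≤ b) :
    StrictMonoOn (fun x => a * x - b / x) (Ioi 0) := by
  intro x hx y _ hxy
  have : b / y ≤ b / x := div_le_div_of_nonneg_left hb hx hxy.le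
  have : a * x < a * y := mul_lt_mul_of_pos_left hxy ha
  dsimp only
  linarith

lemma image_mul_sub_div_Ioi (ha : 0 < a) (hb : 0 < b) :
    (fun x => a * x - b / x) '' Ioi 0 = univ := by
  refine eq_univ_of_forall fun y => ?_
  -- the preimage of `y` is the positive root of `a x² - y x - b`
  set r := √(y ^ 2 + 4 * a * b)
  have hr : r ^ 2 = y ^ 2 + 4 * a * b := sq_sqrt (by positivity)
  have hyr : |y| < r := by
    rw [← sqrt_sq_eq_abs]
    exact sqrt_lt_sqrt (sq_nonneg y) (by nlinarith [mul_pos ha hb])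
  have hyr' : 0 < y + r := by linarith [neg_abs_le y]
  refine ⟨(y + r) / (2 * a), div_pos hyr' (by positivity), ?_⟩
  field_simp
  linear_combination hr

lemma hasDerivAt_const_div (c : ℝ) {x : ℝ} (hx : x ≠ 0) :
    HasDerivAt (fun x => c / x) (-(c / x ^ 2)) x :=
  ((hasDerivAt_inv hx).const_mul c).congr_deriv (by ring)

lemma image_const_div_Ioi (hc : 0 < c) : (fun x => c / x) '' Ioi 0 = Ioi 0 := by
  ext y
  refine ⟨?_, fun hy => ⟨c / y, div_pos hc hy, div_div_cancel₀ hc.ne'⟩⟩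
  rintro ⟨x, hx, rfl⟩
  exact div_pos hc hx

lemma integral_Ioi_comp_const_div (hc : 0 < c) (G : ℝ → E) :
    ∫ x in Ioi 0, (c / x ^ 2) • G (c / x) = ∫ x in Ioi 0, G x := by
  have h := integral_image_eq_integral_abs_deriv_smul measurableSet_Ioi
    (fun x hx => (hasDerivAt_const_div c (ne_of_gt hx)).hasDerivWithinAt)
    (fun x _ y _ hxy => inv_injective (mul_right_injective₀ hc.ne' hxy)) G
  rw [image_const_div_Ioi hc] at h
  rw [h]
  refine setIntegral_congr_fun measurableSet_Ioi fun x hx => ?_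
  rw [abs_neg, abs_of_pos (div_pos hc (pow_pos hx.out 2))]

section CauchySchlomilch

variable (g : ℝ → E)

lemma integral_Ioi_add_div_sq_smul_comp_mul_sub_div (ha : 0 < a) (hb : 0 < b) :
    ∫ x in Ioi 0, (a + b / x ^ 2) • g (a * x - b / x) = ∫ y, g y := by
  have h := integral_image_eq_integral_abs_deriv_smul measurableSet_Ioi
    (fun x hx => (hasDerivAt_mul_sub_div a b (ne_of_gt hx)).hasDerivWithinAt)
    (strictMonoOn_mul_sub_div ha hb.le).injOn g
  rw [image_mul_sub_div_Ioi ha hb, Measure.restrict_univ] at h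
  rw [h]
  refine setIntegral_congr_fun measurableSet_Ioi fun x _ => ?_
  rw [abs_of_pos (by positivity)]

lemma integrableOn_Ioi_add_div_sq_smul_comp_mul_sub_div (ha : 0 < a) (hb : 0 < b)
    (hg : Integrable g) :
    IntegrableOn (fun x => (a + b / x ^ 2) • g (a * x - b / x)) (Ioi 0) := by
  have h := integrableOn_image_iff_integrableOn_abs_deriv_smul measurableSet_Ioi
    (fun x hx => (hasDerivAt_mul_sub_div a b (ne_of_gt hx)).hasDerivWithinAt)
    (strictMonoOn_mul_sub_div ha hb.le).injOn g
  rw [image_mul_sub_div_Ioi ha hb, integrableOn_univ] at h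
  refine (h.mp hg).congr_fun (fun x _ => ?_) measurableSet_Ioi
  dsimp only
  rw [abs_of_pos (by positivity)]

lemma integrableOn_Ioi_comp_mul_sub_div (ha : 0 < a) (hb : 0 < b) (hg : Integrable g) :
    IntegrableOn (fun x => g (a * x - b / x)) (Ioi 0) := by
  have hw : ∀ x : ℝ, a ≤ a + b / x ^ 2 := fun x => by
    have : 0 ≤ b / x ^ 2 := by positivity
    linarith
  have hbdd : ∀ x : ℝ, ‖(a + b / x ^ 2)⁻¹‖ ≤ a⁻¹ := fun x => by
    rw [norm_inv, Real.norm_of_nonneg (ha.le.trans (hw x))]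
    exact inv_anti₀ ha (hw x)
  refine ((integrableOn_Ioi_add_div_sq_smul_comp_mul_sub_div g ha hb hg).bdd_smul a⁻¹
    (by fun_prop : Measurable fun x : ℝ => (a + b / x ^ 2)⁻¹).aestronglyMeasurable
    (Filter.Eventually.of_forall hbdd)).congr (Filter.Eventually.of_forall fun x => ?_)
  exact inv_smul_smul₀ (ha.trans_le (hw x)).ne' _

theorem integral_Ioi_comp_mul_sub_div_of_even (ha : 0 < a) (hb : 0 < b) (hg : Integrable g)
    (heven : g.Even) :
    ∫ x in Ioi 0, g (a * x - b / x) = (2 * a)⁻¹ • ∫ y, g y := by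
  have hcomp := integrableOn_Ioi_comp_mul_sub_div g ha hb hg
  have hinv : ∫ x in Ioi 0, (b / x ^ 2) • g (a * x - b / x) =
      a • ∫ x in Ioi 0, g (a * x - b / x) := by
    rw [← integral_Ioi_comp_const_div (div_pos hb ha), ← integral_smul]
    refine setIntegral_congr_fun measurableSet_Ioi fun x hx => ?_
    have hx : x ≠ 0 := ne_of_gt hx
    have : a * (b / a / x) - b / (b / a / x) = -(a * x - b / x) := by field_simp; ring
    rw [this, heven, smul_smul]
    congr 1
    field_simp
  have hcomp_smul : IntegrableOn (fun x => a • g (a * x - b / x)) (Ioi 0) := hcomp.smul a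
  have hweight : IntegrableOn (fun x => (b / x ^ 2) • g (a * x - b / x)) (Ioi 0) :=
    ((integrableOn_Ioi_add_div_sq_smul_comp_mul_sub_div g ha hb hg).sub hcomp_smul).congr
      (Filter.Eventually.of_forall fun x => by
        simp only [Pi.sub_apply, add_smul, add_sub_cancel_left])
  have hsplit : ∫ y, g y = (∫ x in Ioi 0, a • g (a * x - b / x)) +
      ∫ x in Ioi 0, (b / x ^ 2) • g (a * x - b / x) := by
    rw [← integral_add hcomp_smul hweight, ← integral_Ioi_add_div_sq_smul_comp_mul_sub_div g ha hb]
    simp only [add_smul]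
  rw [hsplit, integral_smul, hinv, ← add_smul, smul_smul,
    show (2 * a)⁻¹ * (a + a) = 1 by field_simp; ring, one_smul]

end CauchySchlomilch

theorem integral_Ioi_exp_neg_sq_mul_sub_div (ha : 0 < a) (hb : 0 < b) :
    ∫ x in Ioi 0, exp (-(a * x - b / x) ^ 2) = √π / (2 * a) := by
  have hg : Integrable fun y : ℝ => exp (-y ^ 2) := by
    simpa using integrable_exp_neg_mul_sq one_pos
  have hgauss : ∫ y : ℝ, exp (-y ^ 2) = √π := by simpa using integral_gaussian 1
  rw [integral_Ioi_comp_mul_sub_div_of_even (fun y => exp (-y ^ 2)) ha hb hg (fun y => by simp),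
    hgauss, smul_eq_mul, inv_mul_eq_div]

theorem integral_Ioi_exp_neg_sq_mul_add_div_sq (ha : 0 < a) (hb : 0 < b) :
    ∫ x in Ioi 0, exp (-(a ^ 2 * x ^ 2 + b ^ 2 / x ^ 2)) = √π / (2 * a) * exp (-(2 * a * b)) := by
  have hsq : ∀ x ∈ Ioi (0 : ℝ),
      exp (-(a ^ 2 * x ^ 2 + b ^ 2 / x ^ 2)) = exp (-(2 * a * b)) * exp (-(a * x - b / x) ^ 2) := by
    intro x hx
    have : x ≠ 0 := ne_of_gt hx
    rw [← exp_add]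
    congr 1
    field_simp
    ring
  rw [setIntegral_congr_fun measurableSet_Ioi hsq, integral_const_mul,
    integral_Ioi_exp_neg_sq_mul_sub_div ha hb, mul_comm]

/-- Heat-kernel subordination formula:
`∫_0^∞ e^{-t s²} e^{-l²/(4t)} (4πt)^{-1/2} dt = e^{-s l}/(2 s)` for `s, l > 0`. -/
theorem integral_exp_heat_kernel (s l : ℝ) (hs : 0 < s) (hl : 0 < l) :
    ∫ t in Set.Ioi (0 : ℝ),
        Real.exp (-t * s ^ 2) * Real.exp (-l ^ 2 / (4 * t)) / Real.sqrt (4 * π * t) =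
      1 / (2 * s) * Real.exp (-s * l) := by
  rw [← integral_comp_rpow_Ioi_of_pos two_pos]
  have hsub : ∀ x ∈ Ioi (0 : ℝ), (2 * x ^ ((2 : ℝ) - 1)) • (exp (-x ^ (2 : ℝ) * s ^ 2) *
      exp (-l ^ 2 / (4 * x ^ (2 : ℝ))) / √(4 * π * x ^ (2 : ℝ))) =
      (√π)⁻¹ * exp (-(s ^ 2 * x ^ 2 + (l / 2) ^ 2 / x ^ 2)) := by
    intro x hx
    have hsqrt : √(4 * π * x ^ 2) = 2 * x * √π := by
      rw [show 4 * π * x ^ 2 = (2 * x) ^ 2 * π by ring, sqrt_mul (by positivity),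
        sqrt_sq (mul_pos two_pos hx.out).le]
    have hexp : -x ^ 2 * s ^ 2 + -l ^ 2 / (4 * x ^ 2) =
        -(s ^ 2 * x ^ 2 + (l / 2) ^ 2 / x ^ 2) := by ring
    rw [show (2 : ℝ) - 1 = 1 by norm_num, rpow_one, rpow_two, smul_eq_mul, hsqrt,
      ← exp_add, hexp]
    field_simp [hx.out.ne']
  rw [setIntegral_congr_fun measurableSet_Ioi hsub, integral_const_mul,
    integral_Ioi_exp_neg_sq_mul_add_div_sq hs (half_pos hl)]
  field_simp
end
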